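/- arXiv:2603.11934 — 2 statements merged into one kernel-verified Lean document; each statement's English description precedes it below -/
import Mathlib

section
/- Let n, k > 1 and k < w < kn, and let α₁ = a₁a₂⋯a_n be the lexicographically smallest necklace in S_k(n,w↑). Let s = p·q be a string in S_k(n,w↑) where q is the longest suffix of s such that q·p is a necklace, and assume s is not of the form k^{n−j} a₁⋯a_j for any 0 ≤ j < n. Let β₂ be the necklace in S_k(n) from the Granddaddy decomposition of s, i.e., the necklace with prefix q that immediately follows (in the lexicographic order of all necklaces in S_k(n)) a necklace with suffix p. Then the smallest necklace δ₂ in S_k(n,w↑) that is lexicographically greater than or equal to β₂ exists, δ₂ is not the largest necklace of S_k(n,w↑) so the necklace δ₃ immediately following δ₂ in the lexicographic order of necklaces in S_k(n,w↑) exists, and q is a prefix of the concatenation ap(δ₂)·ap(δ₃). -/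
/-!
Padding a prefix `x` of a necklace with the largest letter `k` gives a necklace `x k^{n-|x|}`
that is lexicographically at least as large and at least as heavy, and every string lying between
two strings with prefix `x` has prefix `x`. Padding `q` gives a necklace of `S_k(n, w↑)` above
`β₂`, so `δ₂` has prefix `q`; and `δ₂ ≠ k^n`, since otherwise `q`, and then the necklace `q p`,
consist of `k`s, so `δ₃` exists. If `q = ap(δ₂) q₂`, then `q₂` is again a prefix of `δ₂` whose
padding lies strictly above `δ₂`, so `δ₃` also has prefix `q₂`; and `q₂` fits into `ap(δ₃)`
because a necklace `δ₂ < δ₃` shares with `δ₃` no prefix longer than a period of `δ₃`.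
-/

/-- `s` is a string over the alphabet `{1, 2, …, k}`. -/
def IsStr (k : ℕ) (s : List ℕ) : Prop := ∀ x ∈ s, 1 ≤ x ∧ x ≤ k

/-- A necklace is a string that is lexicographically smallest among all of its rotations. -/
def IsNecklace (s : List ℕ) : Prop := ∀ i : ℕ, s ≤ s.rotate i

/-- `β` is a necklace in `S_k(n)`. -/
def IsNeckIn (k n : ℕ) (β : List ℕ) : Prop :=
  IsStr k β ∧ β.length = n ∧ IsNecklace β

/-- `β` is a necklace in `S_k(n, w↑)` (weight at least `w`). -/
def IsNeckInW (k n w : ℕ) (β : List ℕ) : Prop :=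
  IsStr k β ∧ β.length = n ∧ w ≤ β.sum ∧ IsNecklace β

/-- `γ` immediately follows `β` in the lexicographically ordered list `N_k(n)` of all
necklaces in `S_k(n)`, considered cyclically. -/
def CyclicSucc (k n : ℕ) (β γ : List ℕ) : Prop :=
  IsNeckIn k n β ∧ IsNeckIn k n γ ∧
  ((β < γ ∧ ∀ δ : List ℕ, IsNeckIn k n δ → ¬(β < δ ∧ δ < γ)) ∨
   (γ < β ∧ (∀ δ : List ℕ, IsNeckIn k n δ → δ ≤ β) ∧
     (∀ δ : List ℕ, IsNeckIn k n δ → γ ≤ δ)) ∨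
   (β = γ ∧ ∀ δ : List ℕ, IsNeckIn k n δ → δ = β))

/-- `listPow t j` is `j` copies of `t` concatenated. -/
def listPow (t : List ℕ) : ℕ → List ℕ
  | 0 => []
  | j + 1 => t ++ listPow t j

/-- `t` is the aperiodic prefix of `s`: the shortest string some power of which is `s`. -/
def IsApOf (t s : List ℕ) : Prop :=
  (∃ j, 1 ≤ j ∧ s = listPow t j) ∧
  ∀ u m, 1 ≤ m → s = listPow u m → t.length ≤ u.length

open List

namespace List

variable {α : Type*} [LinearOrder α]

theorem cons_le_cons_iff_of_linearOrder {a b : α} {A B : List α} :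
    a :: A ≤ b :: B ↔ a < b ∨ a = b ∧ A ≤ B := by
  simp only [le_iff_lt_or_eq, cons_lt_cons_iff, cons.injEq]
  grind

theorem exists_eq_append_cons_of_lt {A B : List α} (hl : A.length = B.length) (h : A < B) :
    ∃ c a b u v, A = c ++ a :: u ∧ B = c ++ b :: v ∧ a < b := by
  induction A generalizing B with
  | nil => cases B with
    | nil => exact absurd h (not_lt_nil _)
    | cons => simp at hl
  | cons a A ih =>
    cases B with
    | nil => simp at hl
    | cons b B =>
      rcases cons_lt_cons_iff.1 h with hab | ⟨rfl, hAB⟩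
      · exact ⟨[], a, b, A, B, rfl, rfl, hab⟩
      · obtain ⟨c, x, y, u, v, rfl, rfl, hxy⟩ := ih (by simpa using hl) hAB
        exact ⟨a :: c, x, y, u, v, rfl, rfl, hxy⟩

theorem append_lt_append_of_lt {A B : List α} (X Y : List α) (hl : A.length = B.length)
    (h : A < B) : A ++ X < B ++ Y := by
  obtain ⟨c, a, b, u, v, rfl, rfl, hab⟩ := exists_eq_append_cons_of_lt hl h
  simpa using append_left_lt (l₁ := c) (cons_lt_cons_iff.2 (Or.inl hab) :
    a :: (u ++ X) < b :: (v ++ Y))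

theorem le_of_append_le_append {A B X Y : List α} (hl : A.length = B.length)
    (h : A ++ X ≤ B ++ Y) : A ≤ B :=
  le_of_not_gt fun hlt => (append_lt_append_of_lt Y X hl.symm hlt).not_ge h

theorem append_le_append_left_iff {u s t : List α} : u ++ s ≤ u ++ t ↔ s ≤ t := by
  simp only [le_iff_lt_or_eq, append_cancel_left_eq]
  refine or_congr_left ⟨fun h => ?_, append_left_lt⟩
  rcases lt_trichotomy s t with hst | rfl | hts
  · exact hst
  · exact absurd h (lt_irrefl _)
  · exact absurd h (append_left_lt hts).asymm

theorem le_replicate_length {x : List α} {k : α} (hx : ∀ a ∈ x, a ≤ k) :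
    x ≤ replicate x.length k := by
  induction x with
  | nil => exact le_rfl
  | cons a x ih =>
    rw [length_cons, replicate_succ, cons_le_cons_iff_of_linearOrder]
    rcases (hx a mem_cons_self).lt_or_eq with h | rfl
    · exact Or.inl h
    · exact Or.inr ⟨rfl, ih fun b hb => hx b (mem_cons_of_mem _ hb)⟩

theorem IsPrefix.of_le_of_le {x A B C : List α} (hA : x <+: A) (hB : x <+: B) (hAC : A ≤ C)
    (hCB : C ≤ B) : x <+: C := by
  induction x generalizing A B C with
  | nil => exact nil_prefix
  | cons a x ih =>
    obtain ⟨A, rfl⟩ := hA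
    obtain ⟨B, rfl⟩ := hB
    cases C with
    | nil => exact absurd hAC (nil_lt_cons _ _).not_ge
    | cons c C =>
      simp only [cons_append, cons_le_cons_iff_of_linearOrder] at hAC hCB
      rcases hAC with hac | ⟨rfl, hAC⟩
      · rcases hCB with hca | ⟨rfl, -⟩
        · exact absurd (hac.trans hca) (lt_irrefl a)
        · exact absurd hac (lt_irrefl c)
      · rcases hCB with hca | ⟨-, hCB⟩
        · exact absurd hca (lt_irrefl a)
        · exact cons_prefix_cons.2 ⟨rfl, ih (prefix_append _ _) (prefix_append _ _) hAC hCB⟩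

omit [LinearOrder α] in
theorem IsPrefix.prefix_of_ne {x c u v : List α} {a b : α} (hab : a ≠ b) (hu : x <+: c ++ a :: u)
    (hv : x <+: c ++ b :: v) : x <+: c := by
  rcases le_or_gt x.length c.length with h | h
  · exact prefix_of_prefix_length_le hu (prefix_append _ _) h
  have hca : c ++ [a] <+: x := prefix_of_prefix_length_le ⟨u, by simp⟩ hu (by simp; omega)
  have hcb : c ++ [b] <+: x := prefix_of_prefix_length_le ⟨v, by simp⟩ hv (by simp; omega)
  have hcacb := (prefix_of_prefix_length_le hca hcb (by simp)).eq_of_length (by simp)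
  exact absurd (by simpa using hcacb) hab

end List

theorem isNecklace_iff_forall_append {s : List ℕ} :
    IsNecklace s ↔ ∀ u v, s = u ++ v → s ≤ v ++ u := by
  refine ⟨fun h u v huv => ?_, fun h i => ?_⟩
  · simpa [huv, rotate_append_length_eq] using h u.length
  · rw [rotate_eq_drop_append_take_mod]
    exact h _ _ (take_append_drop _ s).symm

theorem isNecklace_replicate (n k : ℕ) : IsNecklace (replicate n k) := fun i => by
  rw [rotate_replicate]

theorem IsNecklace.head_le {b a : ℕ} {l : List ℕ} (h : IsNecklace (b :: l)) (ha : a ∈ b :: l) :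
    b ≤ a := by
  obtain ⟨u, v, huv⟩ := append_of_mem ha
  have := isNecklace_iff_forall_append.1 h u (a :: v) huv
  rw [cons_append, cons_le_cons_iff_of_linearOrder] at this
  rcases this with hba | ⟨rfl, -⟩
  exacts [hba.le, le_rfl]

theorem IsNecklace.append_replicate_succ {k a t : ℕ} {v : List ℕ}
    (hk : ∀ b ∈ v ++ a :: replicate t k, b ≤ k) (h : IsNecklace (v ++ a :: replicate t k)) :
    IsNecklace (v ++ replicate (t + 1) k) := by
  rcases (hk a (by simp)).lt_or_eq with hak | rfl
  swap
  · simpa [replicate_succ] using h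
  rcases eq_or_ne v [] with rfl | hv
  · simpa using isNecklace_replicate (t + 1) k
  rw [isNecklace_iff_forall_append] at h ⊢
  intro x y hxy
  rcases append_eq_append_iff.1 hxy with ⟨z, rfl, hz⟩ | ⟨z, rfl, rfl⟩
  · -- the rotation starts with a `k`, while `v` starts with a letter `≤ a < k`
    rcases y with _ | ⟨c, y⟩
    · simp [← by simpa using hz]
    obtain rfl : c = k := eq_of_mem_replicate (hz ▸ mem_append_right z mem_cons_self)
    obtain ⟨b, v, rfl⟩ := exists_cons_of_ne_nil hv
    have hba : b ≤ a := IsNecklace.head_le (isNecklace_iff_forall_append.2 h) (by simp)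
    exact (cons_lt_cons_iff.2 (Or.inl (hba.trans_lt hak))).le
  · -- compare the prefixes of length `|z| + 1`, which end in `a` and in `k`
    rcases x with _ | ⟨x₀, x⟩
    · simp
    obtain ⟨P, R, hPR, hP⟩ : ∃ P R, x₀ :: x ++ z = P ++ R ∧ P.length = z.length + 1 :=
      ⟨_, _, (take_append_drop (z.length + 1) _).symm, by simp⟩
    have hα := h (x₀ :: x) (z ++ a :: replicate t k) (by simp)
    rw [hPR] at hα
    have hPa : P ≤ z ++ [a] := le_of_append_le_append (X := R ++ a :: replicate t k)
      (Y := replicate t k ++ x₀ :: x) (by simp [hP]) (by simpa using hα)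
    have hPk : P < z ++ [k] := hPa.trans_lt (append_left_lt (cons_lt_cons_iff.2 (Or.inl hak)))
    rw [hPR]
    simpa [replicate_succ] using (append_lt_append_of_lt (R ++ replicate (t + 1) k)
      (replicate t k ++ x₀ :: x) (by simp [hP]) hPk).le

theorem IsNecklace.append_replicate {k : ℕ} :
    ∀ {x r : List ℕ}, (∀ b ∈ x ++ r, b ≤ k) → IsNecklace (x ++ r) →
      IsNecklace (x ++ replicate r.length k)
  | _, [], _, h => by simpa using h
  | x, a :: r, hk, h => by
    have ih : IsNecklace ((x ++ [a]) ++ replicate r.length k) :=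
      IsNecklace.append_replicate (by simpa using hk) (by simpa using h)
    refine IsNecklace.append_replicate_succ (fun b hb => ?_) (by simpa using ih)
    simp only [mem_append, mem_cons] at hb hk
    rcases hb with hb | rfl | hb
    exacts [hk b (Or.inl hb), hk b (Or.inr (Or.inl rfl)), (eq_of_mem_replicate hb).le]

theorem exists_isNecklace_rotate {s : List ℕ} (hs : s ≠ []) :
    ∃ i < s.length, IsNecklace (s.rotate i) := by
  have hpos : 0 < s.length := length_pos_iff.2 hs
  obtain ⟨i, hi, hmin⟩ := (Finset.range s.length).exists_min_image (s.rotate ·)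
    ⟨0, Finset.mem_range.2 hpos⟩
  refine ⟨i, Finset.mem_range.1 hi, fun j => ?_⟩
  rw [rotate_rotate, ← rotate_mod s (i + j)]
  exact hmin _ (Finset.mem_range.2 (Nat.mod_lt _ hpos))

-- `hper` and `hy` say that `|τ|` is a period of `δ'`.
theorem IsNecklace.length_prefix_le_period {δ δ' x τ y : List ℕ} (hδ : IsNecklace δ)
    (hlen : δ.length = δ'.length) (hlt : δ < δ') (hx : x <+: δ) (hx' : x <+: δ')
    (hτ : τ ≠ []) (hper : δ' = τ ++ y) (hy : y <+: δ') : x.length ≤ τ.length := by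
  by_contra! hτx
  obtain ⟨c, a, b, u, v, rfl, rfl, hab⟩ := exists_eq_append_cons_of_lt hlen hlt
  have hxc : x <+: c := hx.prefix_of_ne hab.ne hx'
  obtain ⟨c', rfl⟩ : τ <+: c :=
    prefix_of_prefix_length_le (by rw [hper]; exact prefix_append _ _) (prefix_append _ _)
      (hτx.le.trans hxc.length_le)
  have hy' : y = c' ++ b :: v := by simpa using hper.symm
  -- `δ'` has period `|τ|`, so the letter `b` at position `|c|` recurs at position `|c'|`
  obtain ⟨c₂, hc₂⟩ : c' ++ [b] <+: τ ++ c' := by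
    refine prefix_of_prefix_length_le ((show c' ++ [b] <+: y from ⟨v, by simp [hy']⟩).trans hy)
      (prefix_append _ _) ?_
    simpa using length_pos_iff.2 hτ
  have hrot := isNecklace_iff_forall_append.1 hδ τ (c' ++ a :: u) (by simp)
  rw [show τ ++ c' ++ a :: u = c' ++ b :: (c₂ ++ a :: u) by simp [← hc₂]] at hrot
  exact hrot.not_gt (by simpa using append_left_lt (l₁ := c') (cons_lt_cons_iff.2 (Or.inl hab)))

def pad (k n : ℕ) (x : List ℕ) : List ℕ := x ++ replicate (n - x.length) k

theorem prefix_pad (k n : ℕ) (x : List ℕ) : x <+: pad k n x := prefix_append _ _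

theorem IsNecklace.pad {k : ℕ} {β x : List ℕ} (hk : ∀ b ∈ β, b ≤ k) (h : IsNecklace β)
    (hx : x <+: β) : IsNecklace (pad k β.length x) := by
  obtain ⟨r, rfl⟩ := hx
  simpa [_root_.pad] using h.append_replicate hk

theorem le_pad {k : ℕ} {β x : List ℕ} (hk : ∀ b ∈ β, b ≤ k) (hx : x <+: β) :
    β ≤ pad k β.length x := by
  obtain ⟨r, rfl⟩ := hx
  simpa [pad, append_le_append_left_iff] using
    le_replicate_length fun b hb => hk b (mem_append_right x hb)

theorem sum_le_sum_pad {k : ℕ} {β x : List ℕ} (hk : ∀ b ∈ β, b ≤ k) (hx : x <+: β) :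
    β.sum ≤ (pad k β.length x).sum := by
  obtain ⟨r, rfl⟩ := hx
  simpa [pad] using sum_le_card_nsmul r k fun b hb => hk b (mem_append_right x hb)

section NecklacesOfWeight

variable {k n w : ℕ}

theorem IsNeckInW.toIsNeckIn {δ : List ℕ} (h : IsNeckInW k n w δ) : IsNeckIn k n δ :=
  ⟨h.1, h.2.1, h.2.2.2⟩

theorem IsNeckInW.le_replicate {δ : List ℕ} (h : IsNeckInW k n w δ) : δ ≤ replicate n k :=
  h.2.1 ▸ le_replicate_length fun b hb => (h.1 b hb).2

theorem isNeckInW_replicate (hk : 1 ≤ k) (hw : w ≤ n * k) : IsNeckInW k n w (replicate n k) :=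
  ⟨fun b hb => (eq_of_mem_replicate hb).symm ▸ ⟨hk, le_rfl⟩, length_replicate, by simpa using hw,
    isNecklace_replicate n k⟩

theorem isNeckInW_pad (hk : 1 ≤ k) {β t x : List ℕ} (hβ : IsNeckIn k n β) (hxβ : x <+: β)
    (ht : IsStr k t) (htn : t.length = n) (hxt : x <+: t) (hw : w ≤ t.sum) :
    IsNeckInW k n w (pad k n x) := by
  obtain ⟨hβk, rfl, hβneck⟩ := hβ
  refine ⟨fun b hb => ?_, ?_, ?_, hβneck.pad (fun b hb => (hβk b hb).2) hxβ⟩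
  · rcases mem_append.1 hb with hb | hb
    exacts [hβk b (hxβ.subset hb), (eq_of_mem_replicate hb).symm ▸ ⟨hk, le_rfl⟩]
  · have := hxβ.length_le
    simp [pad]; omega
  · exact hw.trans (htn ▸ sum_le_sum_pad (fun b hb => (ht b hb).2) hxt)

theorem IsNeckInW.pad (hk : 1 ≤ k) {δ x : List ℕ} (hδ : IsNeckInW k n w δ) (hx : x <+: δ) :
    IsNeckInW k n w (pad k n x) :=
  isNeckInW_pad hk hδ.toIsNeckIn hx hδ.1 hδ.2.1 hx hδ.2.2.1

theorem finite_setOf_isNeckInW (k n w : ℕ) : {δ | IsNeckInW k n w δ}.Finite := by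
  refine ((finite_length_eq (Fin (k + 1)) n).image (map Fin.val)).subset fun δ hδ => ?_
  refine ⟨δ.pmap (fun b hb => (⟨b, Nat.lt_succ_of_le hb⟩ : Fin (k + 1)))
    fun b hb => (hδ.1 b hb).2, by simpa using hδ.2.1, ?_⟩
  simp [map_pmap]

theorem exists_least_isNeckInW {P : List ℕ → Prop} (h : ∃ δ, IsNeckInW k n w δ ∧ P δ) :
    ∃ δ, IsNeckInW k n w δ ∧ P δ ∧ ∀ γ, IsNeckInW k n w γ → P γ → δ ≤ γ := by
  obtain ⟨δ, ⟨hδ, hP⟩, hmin⟩ := Set.exists_min_image {δ | IsNeckInW k n w δ ∧ P δ} id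
    ((finite_setOf_isNeckInW k n w).subset fun _ h => h.1) h
  exact ⟨δ, hδ, hP, fun γ hγ hPγ => hmin γ ⟨hγ, hPγ⟩⟩

theorem exists_succ_isNeckInW {δ : List ℕ} (h : ∃ γ, IsNeckInW k n w γ ∧ δ < γ) :
    ∃ δ', IsNeckInW k n w δ' ∧ δ < δ' ∧ ∀ γ, IsNeckInW k n w γ → ¬(δ < γ ∧ γ < δ') := by
  obtain ⟨δ', hδ', hlt, hmin⟩ := exists_least_isNeckInW h
  exact ⟨δ', hδ', hlt, fun γ hγ ⟨hδγ, hγδ'⟩ => (hmin γ hγ hδγ).not_gt hγδ'⟩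

theorem List.IsPrefix.prefix_of_isNeckInW_succ (hk : 1 ≤ k) {δ δ' x : List ℕ}
    (hδ : IsNeckInW k n w δ) (hlt : δ < δ')
    (hsucc : ∀ γ, IsNeckInW k n w γ → ¬(δ < γ ∧ γ < δ')) (hx : x <+: δ)
    (hne : δ ≠ pad k n x) : x <+: δ' := by
  have hδpad : δ ≤ pad k n x := hδ.2.1 ▸ le_pad (fun b hb => (hδ.1 b hb).2) hx
  have hδ'pad : δ' ≤ pad k n x :=
    le_of_not_gt fun h => hsucc _ (hδ.pad hk hx) ⟨lt_of_le_of_ne hδpad hne, h⟩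
  exact hx.of_le_of_le (prefix_pad k n x) hlt.le hδ'pad

end NecklacesOfWeight

theorem listPow_nil (j : ℕ) : listPow [] j = [] := by
  induction j with
  | zero => rfl
  | succ j ih => simpa [listPow] using ih

theorem listPow_succ' (t : List ℕ) (j : ℕ) : listPow t (j + 1) = listPow t j ++ t := by
  induction j with
  | zero => simp [listPow]
  | succ j ih =>
    conv_lhs => rw [listPow, ih, ← append_assoc]
    rfl

theorem listPow_prefix_succ (t : List ℕ) (j : ℕ) : listPow t j <+: listPow t (j + 1) :=
  listPow_succ' t j ▸ prefix_append _ _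

theorem listPow_replicate (m k j : ℕ) : listPow (replicate m k) j = replicate (j * m) k := by
  induction j with
  | zero => simp [listPow]
  | succ j ih => rw [listPow, ih, ← replicate_add, Nat.succ_mul, Nat.add_comm]

theorem listPow_eq_replicate_of_eq_pad {k n j : ℕ} {t x : List ℕ}
    (h : listPow t (j + 1) = pad k n x) (hlen : x.length + t.length ≤ n) :
    listPow t (j + 1) = replicate n k := by
  have hn : (listPow t (j + 1)).length = n := by rw [h]; simp [pad]; omega
  have hsplit : pad k n x =
      (x ++ replicate (n - x.length - t.length) k) ++ replicate t.length k := by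
    rw [pad, append_assoc, ← replicate_add]
    congr 2
    omega
  obtain ⟨-, ht⟩ := append_inj' (listPow_succ' t j ▸ h.trans hsplit) (by simp)
  rw [ht, listPow_replicate, length_replicate] at hn
  rw [ht, listPow_replicate, hn]

theorem prefix_append_of_isNeckInW_succ {k n w j j' : ℕ} (hk : 1 ≤ k) {δ δ' x t t' : List ℕ}
    (hδ : IsNeckInW k n w δ) (hδ' : IsNeckInW k n w δ') (hlt : δ < δ')
    (hsucc : ∀ γ, IsNeckInW k n w γ → ¬(δ < γ ∧ γ < δ')) (hx : x <+: δ)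
    (ht : δ = listPow t (j + 1)) (ht' : δ' = listPow t' (j' + 1)) : x <+: t ++ t' := by
  have htδ : t <+: δ := ht ▸ prefix_append _ _
  rcases le_total x.length t.length with hxt | htx
  · exact (prefix_of_prefix_length_le hx htδ hxt).trans (prefix_append _ _)
  obtain ⟨x', rfl⟩ := prefix_of_prefix_length_le htδ hx htx
  have hx'pow : x' <+: listPow t j := (prefix_append_right_inj t).1 (by rwa [ht] at hx)
  have hx'δ : x' <+: δ := by rw [ht]; exact hx'pow.trans (listPow_prefix_succ t j)
  have hne : δ ≠ pad k n x' := by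
    intro h
    have hlen : x'.length + t.length ≤ n := by
      have := congrArg length ht
      simp only [hδ.2.1, listPow, length_append] at this
      have := hx'pow.length_le
      omega
    exact (hlt.trans_le hδ'.le_replicate).ne (ht ▸ listPow_eq_replicate_of_eq_pad (ht ▸ h) hlen)
  have hx'δ' : x' <+: δ' := hx'δ.prefix_of_isNeckInW_succ hk hδ hlt hsucc hne
  have ht'ne : t' ≠ [] := by
    rintro rfl
    simp [ht', listPow_nil] at hlt
  have hx't' : x'.length ≤ t'.length :=
    hδ.2.2.2.length_prefix_le_period (hδ.2.1.trans hδ'.2.1.symm) hlt hx'δ hx'δ' ht'ne ht'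
      (ht' ▸ listPow_prefix_succ t' j')
  exact (prefix_append_right_inj t).2
    (prefix_of_prefix_length_le hx'δ' (ht' ▸ prefix_append _ _) hx't')

theorem forall_mem_eq_of_pad_eq_replicate {k n : ℕ} {q p : List ℕ}
    (h : IsNecklace (q ++ p)) (hk : ∀ b ∈ q ++ p, b ≤ k) (hq : q ≠ [])
    (hpad : pad k n q = replicate n k) : ∀ b ∈ q ++ p, b = k := by
  obtain ⟨c, q, rfl⟩ := exists_cons_of_ne_nil hq
  obtain rfl : c = k :=
    eq_of_mem_replicate (hpad ▸ mem_append_left _ mem_cons_self : c ∈ replicate n k)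
  exact fun b hb => le_antisymm (hk b hb) (h.head_le hb)

theorem prefix_of_ap_delta2_delta3_general
    (n k w : ℕ) (hn : 1 < n) (hk : 1 < k)
    (α₁ : List ℕ)
    (s p q : List ℕ) (hstr : IsStr k s) (hlen : s.length = n) (hwt : w ≤ s.sum)
    (hpq : s = p ++ q) (hneck : IsNecklace (q ++ p))
    (hlongest : ∀ p' q' : List ℕ, s = p' ++ q' → IsNecklace (q' ++ p') →
      q'.length ≤ q.length)
    (hnotwrap : ∀ j : ℕ, j < n → s ≠ List.replicate (n - j) k ++ α₁.take j)
    (β₁ β₂ : List ℕ) (hconsec : CyclicSucc k n β₁ β₂)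
    (hq : q <+: β₂) :
    -- the smallest necklace `δ₂` of `S_k(n,w↑)` with `β₂ ≤ δ₂` exists …
    (∃ δ₂ : List ℕ, IsNeckInW k n w δ₂ ∧ β₂ ≤ δ₂ ∧
      ∀ δ : List ℕ, IsNeckInW k n w δ → β₂ ≤ δ → δ₂ ≤ δ) ∧
    (∀ δ₂ : List ℕ,
      (IsNeckInW k n w δ₂ ∧ β₂ ≤ δ₂ ∧
        ∀ δ : List ℕ, IsNeckInW k n w δ → β₂ ≤ δ → δ₂ ≤ δ) →
      -- … `δ₂` is not the largest, so its successor `δ₃` in `S_k(n,w↑)` exists …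
      (∃ δ₃ : List ℕ, IsNeckInW k n w δ₃ ∧ δ₂ < δ₃ ∧
        ∀ δ : List ℕ, IsNeckInW k n w δ → ¬(δ₂ < δ ∧ δ < δ₃)) ∧
      -- … and `q` is a prefix of `ap(δ₂)·ap(δ₃)`.
      (∀ δ₃ : List ℕ,
        (IsNeckInW k n w δ₃ ∧ δ₂ < δ₃ ∧
          ∀ δ : List ℕ, IsNeckInW k n w δ → ¬(δ₂ < δ ∧ δ < δ₃)) →
        ∀ t₂ t₃ : List ℕ, IsApOf t₂ δ₂ → IsApOf t₃ δ₃ → q <+: (t₂ ++ t₃))) := by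
  subst hpq
  have hqp : IsStr k (q ++ p) := fun b hb => hstr b (by simpa [or_comm] using hb)
  have hγ : IsNeckInW k n w (pad k n q) :=
    isNeckInW_pad hk.le hconsec.2.1 hq hqp (by simpa [add_comm] using hlen) (prefix_append q p)
      (by simpa [add_comm] using hwt)
  have hβ₂γ : β₂ ≤ pad k n q :=
    hconsec.2.1.2.1 ▸ le_pad (fun b hb => (hconsec.2.1.1 b hb).2) hq
  have hqne : q ≠ [] := by
    rintro rfl
    obtain ⟨i, hi, hrot⟩ := exists_isNecklace_rotate (s := p) (by rintro rfl; simp at hlen; omega)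
    have := hlongest (p.take i) (p.drop i) (by simp) (rotate_eq_drop_append_take hi.le ▸ hrot)
    simp at this
    omega
  have hγtop : pad k n q ≠ replicate n k := fun h =>
    hnotwrap 0 (by omega) (by simpa using eq_replicate_iff.2 ⟨hlen, fun b hb =>
      forall_mem_eq_of_pad_eq_replicate hneck (fun b hb => (hqp b hb).2) hqne h b
        (by simpa [or_comm] using hb)⟩)
  refine ⟨exists_least_isNeckInW ⟨_, hγ, hβ₂γ⟩, ?_⟩
  rintro δ₂ ⟨hδ₂, hβ₂δ₂, hδ₂min⟩
  have hδ₂γ : δ₂ ≤ pad k n q := hδ₂min _ hγ hβ₂γ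
  have hδ₂top : δ₂ < replicate n k := hδ₂.le_replicate.lt_of_ne fun h =>
    hγtop (le_antisymm hγ.le_replicate (h ▸ hδ₂γ))
  have hw : w ≤ n * k :=
    hwt.trans (hlen ▸ by simpa using sum_le_card_nsmul _ k fun b hb => (hstr b hb).2)
  refine ⟨exists_succ_isNeckInW ⟨_, isNeckInW_replicate hk.le hw, hδ₂top⟩, ?_⟩
  rintro δ₃ ⟨hδ₃, hlt, hsucc⟩ t₂ t₃ ⟨⟨j₂, hj₂, h₂⟩, -⟩ ⟨⟨j₃, hj₃, h₃⟩, -⟩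
  obtain ⟨j₂, rfl⟩ := Nat.exists_eq_add_of_le' hj₂
  obtain ⟨j₃, rfl⟩ := Nat.exists_eq_add_of_le' hj₃
  exact prefix_append_of_isNeckInW_succ hk.le hδ₂ hδ₃ hlt hsucc
    (hq.of_le_of_le (prefix_pad k n q) hβ₂δ₂ hδ₂γ) h₂ h₃

/-- Lemma 7 (`δ₂` and `δ₃` exist and `ap(δ₂)·ap(δ₃)` has prefix `q`).
Here `β₂` is the necklace from the Granddaddy decomposition of `s`: the necklace with
prefix `q` that immediately follows (cyclically, in `N_k(n)`) a necklace `β₁` with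
suffix `p`. -/
theorem prefix_of_ap_delta2_delta3
    (n k w : ℕ) (hn : 1 < n) (hk : 1 < k) (hw1 : k < w) (hw2 : w < k * n)
    (α₁ : List ℕ) (hα₁ : IsNeckInW k n w α₁)
    (hα₁min : ∀ β : List ℕ, IsNeckInW k n w β → α₁ ≤ β)
    (s p q : List ℕ) (hstr : IsStr k s) (hlen : s.length = n) (hwt : w ≤ s.sum)
    (hpq : s = p ++ q) (hneck : IsNecklace (q ++ p))
    (hlongest : ∀ p' q' : List ℕ, s = p' ++ q' → IsNecklace (q' ++ p') →
      q'.length ≤ q.length)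
    (hnotwrap : ∀ j : ℕ, j < n → s ≠ List.replicate (n - j) k ++ α₁.take j)
    (β₁ β₂ : List ℕ) (hconsec : CyclicSucc k n β₁ β₂)
    (hp : p <:+ β₁) (hq : q <+: β₂) :
    -- the smallest necklace `δ₂` of `S_k(n,w↑)` with `β₂ ≤ δ₂` exists …
    (∃ δ₂ : List ℕ, IsNeckInW k n w δ₂ ∧ β₂ ≤ δ₂ ∧
      ∀ δ : List ℕ, IsNeckInW k n w δ → β₂ ≤ δ → δ₂ ≤ δ) ∧
    (∀ δ₂ : List ℕ,
      (IsNeckInW k n w δ₂ ∧ β₂ ≤ δ₂ ∧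
        ∀ δ : List ℕ, IsNeckInW k n w δ → β₂ ≤ δ → δ₂ ≤ δ) →
      -- … `δ₂` is not the largest, so its successor `δ₃` in `S_k(n,w↑)` exists …
      (∃ δ₃ : List ℕ, IsNeckInW k n w δ₃ ∧ δ₂ < δ₃ ∧
        ∀ δ : List ℕ, IsNeckInW k n w δ → ¬(δ₂ < δ ∧ δ < δ₃)) ∧
      -- … and `q` is a prefix of `ap(δ₂)·ap(δ₃)`.
      (∀ δ₃ : List ℕ,
        (IsNeckInW k n w δ₃ ∧ δ₂ < δ₃ ∧
          ∀ δ : List ℕ, IsNeckInW k n w δ → ¬(δ₂ < δ ∧ δ < δ₃)) →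
        ∀ t₂ t₃ : List ℕ, IsApOf t₂ δ₂ → IsApOf t₃ δ₃ → q <+: (t₂ ++ t₃))) :=
  prefix_of_ap_delta2_delta3_general n k w hn hk α₁ s p q hstr hlen hwt hpq hneck hlongest hnotwrap
    β₁ β₂ hconsec hq
end

section
/- Let n, k > 1 and let α = a₁a₂⋯a_n be a necklace in S_k(n,w↑). For 1 ≤ t ≤ n and 0 ≤ j ≤ n−1, let A(t,j) be the number of strings s = s₁⋯s_n in S_k(n,w↑) whose lexicographically smallest rotation is smaller than α, such that t is the smallest index for which the rotation s_t⋯s_n s₁⋯s_{t−1} is lexicographically smaller than α, and j is the largest integer such that a₁⋯a_j is a prefix of that rotation. Suppose t + j > n, and let z be the length of the longest suffix of a_{n−t+2}⋯a_{j−1}a_j that equals the prefix a₁⋯a_z of α of the same length. If a_{j+1} > a_{z+1}, then A(t,j) = B(n−j+z, z+1, w − wt(a₁⋯a_{j−z})) + Σ_{x=a_{z+1}+1}^{a_{j+1}−1} B(n−j−1, 0, w − wt(a₁⋯a_j) − x), where B(t',j',w') denotes the number of length-t' strings over {1,…,k} with weight at least w', prefix a₁⋯a_{j'}, and all non-empty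 suffixes lexicographically greater than α; otherwise (if a_{j+1} ≤ a_{z+1}) A(t,j) = 0. -/
/-- `A(t,j)`: the number of strings `s` in `S_k(n,w↑)` whose lexicographically smallest
rotation is smaller than `α`, `t` (1-based) being the smallest index for which the
rotation `s_t⋯s_n s₁⋯s_{t-1}` is smaller than `α`, and `j` the largest integer such that
`a₁⋯a_j` is a prefix of that rotation. -/
noncomputable def Acount (k n w : ℕ) (α : List ℕ) (t j : ℕ) : ℕ :=
  {s : List ℕ | IsStr k s ∧ s.length = n ∧ w ≤ s.sum ∧
    s.rotate (t - 1) < α ∧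
    (∀ t' : ℕ, 1 ≤ t' → t' < t → ¬ s.rotate (t' - 1) < α) ∧
    α.take j <+: s.rotate (t - 1) ∧
    (∀ j' : ℕ, α.take j' <+: s.rotate (t - 1) → j' ≤ j)}.ncard

/-- `B(t',j',w')`: the number of length-`t'` strings over `{1,…,k}` with weight at least
`w'`, prefix `a₁⋯a_{j'}`, whose non-empty suffixes are all lexicographically greater
than `α`. -/
noncomputable def Bcount (k : ℕ) (α : List ℕ) (t j : ℕ) (w : ℤ) : ℕ :=
  {s : List ℕ | IsStr k s ∧ s.length = t ∧ w ≤ (s.sum : ℤ) ∧ α.take j <+: s ∧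
    ∀ suf : List ℕ, suf ≠ [] → suf <:+ s → α < suf}.ncard

/-!
Rotating by `t - 1` turns the strings counted by `A(t,j)` into the strings `r` of length `n`
with `r₁⋯r_j = a₁⋯a_j`, `r_{j+1} < a_{j+1}`, and all suffixes starting after position `n - t`
greater than `α`: since `r < α` and `α` is a necklace, a rotation of `r` is at least `α` exactly
when the corresponding suffix of `r` exceeds `α`.

A suffix of `r` starting inside `a₁⋯a_j` (after position `n - t`) either exceeds `α` already
within `a₁⋯a_j`, or, by minimality of the necklace, its part inside `a₁⋯a_j` is a prefix
`a₁⋯a_p` of `α` with `p ≤ z`, and then `a_{p+1} ≤ a_{z+1}`. For `p = z` this forces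
`r_{j+1} ≥ a_{z+1}`. If `r_{j+1} > a_{z+1}`, only the suffixes after position `j + 1` still
matter, which gives the terms `B(n-j-1, 0, ·)`. If `r_{j+1} = a_{z+1}`, the suffix starting at
position `j - z + 1` begins with `a₁⋯a_{z+1}`, and the conditions on `r` are exactly those on this
suffix, which gives `B(n-j+z, z+1, ·)`.
-/

namespace List

variable {β : Type*}

theorem drop_eq_getD_cons {l : List β} {i : ℕ} (d : β) (h : i < l.length) :
    l.drop i = l.getD i d :: l.drop (i + 1) := by
  rw [drop_eq_getElem_cons h, getD_eq_getElem _ _ h]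

theorem forall_suffix_drop_iff {l : List β} {m : ℕ} {P : List β → Prop} :
    (∀ s, s ≠ [] → s <:+ l.drop m → P s) ↔ ∀ i, m ≤ i → i < l.length → P (l.drop i) := by
  refine ⟨fun h i hmi hi => h _ (by simpa using hi) ?_, fun h s hs hsuf => ?_⟩
  · simpa [drop_drop, Nat.add_sub_cancel' hmi] using drop_suffix (i - m) (l.drop m)
  · rw [suffix_iff_eq_drop.1 hsuf, drop_drop]
    have := hsuf.length_le
    have := length_pos_iff.2 hs
    exact h _ (by omega) (by simp at *; omega)

theorem rotate_rotate_sub_add {s : List β} {t t' : ℕ} (ht' : 1 ≤ t') (htt : t' ≤ t)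
    (ht : t ≤ s.length) : (s.rotate (t - 1)).rotate (s.length - t + t') = s.rotate (t' - 1) := by
  rw [rotate_rotate, show t - 1 + (s.length - t + t') = s.length + (t' - 1) by omega,
    ← rotate_rotate, rotate_length]

theorem forall_rotate_sub_one_iff {s : List β} {t : ℕ} (ht : t ≤ s.length)
    {P : List β → Prop} :
    (∀ t', 1 ≤ t' → t' < t → P (s.rotate (t' - 1))) ↔
      ∀ i, s.length - t < i → i < s.length → P ((s.rotate (t - 1)).rotate i) := by
  refine ⟨fun h i hi hin => ?_, fun h t' ht' htt => ?_⟩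
  · obtain ⟨t', rfl⟩ : ∃ t', i = s.length - t + t' := ⟨i - (s.length - t), by omega⟩
    rw [rotate_rotate_sub_add (by omega) (by omega) ht]
    exact h t' (by omega) (by omega)
  · rw [← rotate_rotate_sub_add ht' htt.le ht]
    exact h _ (by omega) (by omega)

theorem drop_eq_drop_take_append_drop {l : List β} {i j : ℕ} (hij : i ≤ j) (hj : j ≤ l.length) :
    l.drop i = (l.take j).drop i ++ l.drop j := by
  conv_lhs => rw [← take_append_drop j l]
  rw [drop_append_of_le_length (by simp; omega)]

section LinearOrder

variable [LinearOrder β]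

theorem append_lt_append_left_iff {l u v : List β} : l ++ u < l ++ v ↔ u < v := by
  refine ⟨fun h => lt_of_not_ge fun hvu => ?_, append_left_lt⟩
  rcases hvu.lt_or_eq with hvu | rfl
  · exact (append_left_lt (l₁ := l) hvu).not_gt h
  · exact h.false

theorem append_le_append_left_iff_s16 {l u v : List β} : l ++ u ≤ l ++ v ↔ u ≤ v := by
  simp only [← not_lt, append_lt_append_left_iff]

theorem append_lt_append_of_lt_of_not_prefix {u v : List β} (h : u < v) (hp : ¬ u <+: v)
    (s s' : List β) : u ++ s < v ++ s' := by
  rw [← lex_lt] at h ⊢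
  induction h with
  | nil => exact absurd (nil_prefix) hp
  | rel hab => exact .rel hab
  | cons _ ih => exact .cons (ih fun h => hp (cons_prefix_cons.2 ⟨rfl, h⟩))

theorem append_lt_append_of_lt_of_length_le {u v : List β} (h : u < v)
    (hl : v.length ≤ u.length) (s s' : List β) : u ++ s < v ++ s' :=
  append_lt_append_of_lt_of_not_prefix h
    (fun hp => h.ne (hp.eq_of_length (le_antisymm hp.length_le hl))) s s'

theorem lt_of_take_eq_of_drop_lt {u v : List β} {p : ℕ} (h : u.take p = v.take p)
    (hd : u.drop p < v.drop p) : u < v := by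
  rw [← take_append_drop p u, ← take_append_drop p v, h]
  exact append_left_lt hd

theorem lt_of_take_eq_of_getD_lt {u v : List β} {p : ℕ} {d : β} (h : u.take p = v.take p)
    (hu : p < u.length) (hv : p < v.length) (hlt : u.getD p d < v.getD p d) : u < v :=
  lt_of_take_eq_of_drop_lt h <| by
    rw [drop_eq_getD_cons d hu, drop_eq_getD_cons d hv]
    exact .rel hlt

theorem take_le_take_of_lt {u v : List β} (h : u < v) (p : ℕ) : u.take p ≤ v.take p := by
  rw [← lex_lt] at h
  induction h generalizing p with
  | nil => cases p with
    | zero => exact le_rfl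
    | succ p => exact le_of_lt Lex.nil
  | rel hab => cases p with
    | zero => exact le_rfl
    | succ p => exact le_of_lt (Lex.rel hab)
  | cons _ ih => cases p with
    | zero => exact le_rfl
    | succ p => exact cons_le_cons _ (ih p)

theorem take_le_take_of_le {u v : List β} (h : u ≤ v) (p : ℕ) : u.take p ≤ v.take p :=
  h.lt_or_eq.elim (fun h => take_le_take_of_lt h p) fun h => h ▸ le_rfl

theorem lt_take_append_cons {l : List β} {p : ℕ} {d y : β} (hp : p < l.length)
    (h : l.getD p d < y) (s : List β) : l < l.take p ++ y :: s :=
  lt_of_take_eq_of_getD_lt (by rw [take_left' (by simp; omega)]) hp (by simp; omega)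
    (by simpa [getD_append_right, hp.le])

theorem take_append_cons_lt {l : List β} {p : ℕ} {d y : β} (hp : p < l.length)
    (h : y < l.getD p d) (s : List β) : l.take p ++ y :: s < l :=
  lt_of_take_eq_of_getD_lt (take_left' (by simp; omega)) (by simp; omega) hp
    (by simpa [getD_append_right, hp.le])

theorem lt_and_take_prefix_maximal_iff {r l : List β} {j : ℕ} (d : β) (hr : j < r.length)
    (hl : j < l.length) :
    (r < l ∧ l.take j <+: r ∧ ∀ j', l.take j' <+: r → j' ≤ j) ↔
      r.take j = l.take j ∧ r.getD j d < l.getD j d := by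
  have hpre : ∀ i, i ≤ l.length → (l.take i <+: r ↔ r.take i = l.take i) := fun i hi => by
    rw [prefix_iff_eq_take, length_take, min_eq_left hi, eq_comm]
  have hget : l.take (j + 1) <+: r → r.getD j d = l.getD j d := fun h => by
    rw [getD_eq_getElem _ _ hr, getD_eq_getElem _ _ hl, ← h.getElem (by simp; omega),
      getElem_take]
  rw [hpre j hl.le]
  constructor
  · rintro ⟨hlt, htake, hmax⟩
    refine ⟨htake, lt_of_le_of_ne (not_lt.1 fun h => ?_) fun h => ?_⟩
    · exact hlt.not_gt (lt_of_take_eq_of_getD_lt htake.symm hl hr h)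
    · refine absurd (hmax (j + 1) ((hpre _ hl).2 ?_)) (by omega)
      rw [take_add_one, take_add_one, htake, getElem?_eq_getElem hr, getElem?_eq_getElem hl,
        ← getD_eq_getElem _ d hr, ← getD_eq_getElem _ d hl, h]
  · rintro ⟨htake, hlt⟩
    refine ⟨lt_of_take_eq_of_getD_lt htake hr hl hlt, htake, fun j' hj' => ?_⟩
    by_contra! hjj
    exact hlt.ne (hget ((take_prefix_take_left hjj).trans hj'))

end LinearOrder

end List

theorem isStr_rotate {k : ℕ} {s : List ℕ} (i : ℕ) : IsStr k (s.rotate i) ↔ IsStr k s := by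
  simp [IsStr, List.mem_rotate]

theorem IsStr.getD_bounds {k i : ℕ} {α : List ℕ} (h : IsStr k α) (hi : i < α.length) :
    1 ≤ α.getD i 0 ∧ α.getD i 0 ≤ k :=
  h _ (by rw [List.getD_eq_getElem _ _ hi]; exact List.getElem_mem _)

theorem finite_setOf_isStr_length (k n : ℕ) : {s : List ℕ | IsStr k s ∧ s.length = n}.Finite := by
  refine ((List.finite_length_eq (Fin (k + 1)) n).image (List.map Fin.val)).subset ?_
  rintro s ⟨hs, rfl⟩
  refine ⟨s.pmap (fun x hx => (⟨x, Nat.lt_succ_of_le hx⟩ : Fin (k + 1)))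
    (fun x hx => (hs x hx).2), by simp, by simp [List.map_pmap]⟩

theorem IsNecklace.take_le_take_drop {α : List ℕ} (h : IsNecklace α) {i p : ℕ}
    (hip : i + p ≤ α.length) : α.take p ≤ (α.drop i).take p := by
  have := List.take_le_take_of_le (h i) p
  rwa [List.rotate_eq_drop_append_take (by omega),
    List.take_append_of_le_length (by simp; omega)] at this

theorem IsNecklace.le_rotate_iff_lt_drop {α r : List ℕ} (hα : IsNecklace α)
    (hr : r.length = α.length) (hrα : r < α) {i : ℕ} (hi : i < α.length) :
    α ≤ r.rotate i ↔ α < r.drop i := by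
  have hrot : r.rotate i = r.drop i ++ r.take i := List.rotate_eq_drop_append_take (by omega)
  refine ⟨fun hle => ?_, fun hlt => ?_⟩
  · by_contra! hdrop
    have hdlt : r.drop i < α := hdrop.lt_of_ne fun e => by
      obtain rfl : i = 0 := by have := congrArg List.length e; simp [hr] at this; omega
      exact hrα.ne (by simpa using e)
    -- If the short suffix `r.drop i` is a prefix of `α`, comparing `α` with the rotation
    -- squeezes `r` into the rotation `α.rotate m`, which cannot be smaller than `α`.
    by_cases hpre : r.drop i <+: α
    · set m := α.length - i
      have htake : α.take m = r.drop i := by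
        simpa [hr, m] using (List.prefix_iff_eq_take.1 hpre).symm
      have hsplit : α = r.drop i ++ α.drop m := by rw [← htake, List.take_append_drop]
      have h1 : α.drop m ≤ r.take i := by
        rwa [hrot, hsplit, List.append_le_append_left_iff_s16] at hle
      have h2 : α.take i ≤ α.drop m := by
        have := hα.take_le_take_drop (i := m) (p := i) (by omega)
        rwa [List.take_of_length_le (l := α.drop m) (by simp [m]; omega)] at this
      have heq : r.take i = α.drop m :=
        le_antisymm ((List.take_le_take_of_le hrα.le i).trans h2) h1
      have hrm : α.rotate m = r := by
        rw [List.rotate_eq_drop_append_take (by omega), ← heq, htake, List.take_append_drop]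
      exact (hα m).not_gt (hrm ▸ hrα)
    · exact hle.not_gt (hrot ▸ by
        simpa using List.append_lt_append_of_lt_of_not_prefix hdlt hpre (r.take i) [])
  · rw [hrot]
    exact (by simpa using List.append_lt_append_of_lt_of_length_le hlt (by simp; omega) [] _ :
      α < _).le

/-- The rotations `s.rotate (t - 1)` of the strings counted by `Acount`, described by their
suffixes instead of their rotations. -/
def AStrings (k n w : ℕ) (α : List ℕ) (t j : ℕ) : Set (List ℕ) :=
  {r | IsStr k r ∧ r.length = n ∧ w ≤ r.sum ∧ r.take j = α.take j ∧
    r.getD j 0 < α.getD j 0 ∧ ∀ i, n - t < i → i < n → α < r.drop i}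

def BStrings (k : ℕ) (α : List ℕ) (t j : ℕ) (w : ℤ) : Set (List ℕ) :=
  {s | IsStr k s ∧ s.length = t ∧ w ≤ (s.sum : ℤ) ∧ α.take j <+: s ∧
    ∀ suf : List ℕ, suf ≠ [] → suf <:+ s → α < suf}

theorem Bcount_eq_ncard (k : ℕ) (α : List ℕ) (t j : ℕ) (w : ℤ) :
    Bcount k α t j w = (BStrings k α t j w).ncard := rfl

theorem AStrings_finite (k n w : ℕ) (α : List ℕ) (t j : ℕ) : (AStrings k n w α t j).Finite :=
  (finite_setOf_isStr_length k n).subset fun _ hr => ⟨hr.1, hr.2.1⟩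

theorem Acount_eq_ncard_AStrings {k n w t j : ℕ} {α : List ℕ} (hα : IsNecklace α)
    (hlen : α.length = n) (htn : t ≤ n) (hj : j < n) :
    Acount k n w α t j = (AStrings k n w α t j).ncard := by
  have hrange : AStrings k n w α t j ⊆ Set.range (fun s : List ℕ => s.rotate (t - 1)) := fun r hr =>
    ⟨r.rotate (n - (t - 1)), by
      dsimp only
      rw [List.rotate_rotate, Nat.sub_add_cancel (by omega), ← hr.2.1, List.rotate_length]⟩
  rw [Acount, ← Set.ncard_preimage_of_injective_subset_range (List.rotate_injective _) hrange]
  congr 1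
  ext s
  simp only [Set.mem_ofPred_eq, Set.mem_preimage, AStrings, isStr_rotate, List.length_rotate,
    (s.rotate_perm _).sum_eq]
  refine and_congr_right fun _ => and_congr_right fun hs => and_congr_right fun _ => ?_
  subst hs
  have hprefix := List.lt_and_take_prefix_maximal_iff (r := s.rotate (t - 1)) (l := α) 0
    (by simp; omega) (by omega)
  have hrotate := List.forall_rotate_sub_one_iff htn (P := fun r => ¬ r < α)
  constructor
  · rintro ⟨hlt, hrot, hpre, hmax⟩
    obtain ⟨htake, hget⟩ := hprefix.1 ⟨hlt, hpre, hmax⟩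
    exact ⟨htake, hget, fun i hi hin => (hα.le_rotate_iff_lt_drop (by simp [hlen]) hlt
      (by omega)).1 (not_lt.1 (hrotate.1 hrot i hi hin))⟩
  · rintro ⟨htake, hget, hsuf⟩
    obtain ⟨hlt, hpre, hmax⟩ := hprefix.2 ⟨htake, hget⟩
    exact ⟨hlt, hrotate.2 fun i hi hin =>
      not_lt.2 ((hα.le_rotate_iff_lt_drop (by simp [hlen]) hlt (by omega)).2 (hsuf i hi hin)),
      hpre, hmax⟩

/-- `z` is the length of the longest suffix of `α.take j` that starts at position `m` or later
and is a prefix of `α`. -/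
structure IsLongestBorder {β : Type*} (α : List β) (m j z : ℕ) : Prop where
  add_le : m + z ≤ j
  drop_eq : (α.take j).drop (j - z) = α.take z
  le_of_drop_eq : ∀ p, m + p ≤ j → (α.take j).drop (j - p) = α.take p → p ≤ z

namespace IsLongestBorder

variable {α : List ℕ} {m j z : ℕ}

theorem getD_le_getD (hz : IsLongestBorder α m j z) (hα : IsNecklace α) (hj : j < α.length)
    {p : ℕ} (hpz : p ≤ z) (hp : (α.take j).drop (j - p) = α.take p) :
    α.getD p 0 ≤ α.getD z 0 := by
  have hzj := hz.add_le
  have hshift : (α.drop (z - p)).take p = α.take p := by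
    rw [List.take_drop, Nat.sub_add_cancel hpz, ← hz.drop_eq, List.drop_drop,
      show j - z + (z - p) = j - p by omega, hp]
  by_contra! hlt
  refine (hα.take_le_take_drop (i := z - p) (p := p + 1) (by omega)).not_gt
    (List.lt_of_take_eq_of_getD_lt (p := p) (d := 0)
      (by rw [List.take_take, List.take_take, min_eq_left (by omega), hshift]) (by simp; omega)
      (by simp; omega) ?_)
  simpa [List.getD_eq_getElem?_getD, List.getElem?_take, Nat.sub_add_cancel hpz] using hlt

theorem lt_drop_or_drop_eq (hz : IsLongestBorder α m j z) (hα : IsNecklace α)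
    (hj : j < α.length) {r : List ℕ} (hr : r.take j = α.take j) (hrj : j ≤ r.length)
    {i : ℕ} (hmi : m ≤ i) (hij : i ≤ j) :
    α < r.drop i ∨ ((α.take j).drop i = α.take (j - i) ∧ j - i ≤ z) := by
  have hneck : α.take (j - i) ≤ (α.take j).drop i := by
    rw [List.drop_take]
    exact hα.take_le_take_drop (by omega)
  rcases hneck.lt_or_eq with hlt | heq
  · left
    have := List.append_lt_append_of_lt_of_length_le hlt (by simp; omega) (α.drop (j - i))
      (r.drop j)
    rwa [List.take_append_drop, ← hr, ← List.drop_eq_drop_take_append_drop hij hrj] at this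
  · exact .inr ⟨heq.symm, hz.le_of_drop_eq _ (by omega) (by rw [Nat.sub_sub_self hij, heq])⟩

theorem lt_drop_of_lt_sub (hz : IsLongestBorder α m j z) (hα : IsNecklace α)
    (hj : j < α.length) {r : List ℕ} (hr : r.take j = α.take j) (hrj : j ≤ r.length)
    {i : ℕ} (hmi : m ≤ i) (hiz : i < j - z) : α < r.drop i :=
  (hz.lt_drop_or_drop_eq hα hj hr hrj hmi (by omega)).resolve_right fun h => by omega

theorem lt_drop_take_append_cons (hz : IsLongestBorder α m j z) (hα : IsNecklace α)
    (hj : j < α.length) {x : ℕ} (hx : α.getD z 0 < x) (γ : List ℕ) {i : ℕ} (hmi : m ≤ i)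
    (hij : i ≤ j) : α < (α.take j ++ x :: γ).drop i := by
  have htj : (α.take j).length = j := by simp; omega
  rcases hz.lt_drop_or_drop_eq hα hj (r := α.take j ++ x :: γ) (List.take_left' htj)
    (by simp; omega) hmi hij with h | ⟨hd, hp⟩
  · exact h
  · rw [List.drop_append_of_le_length (by omega), hd]
    refine List.lt_take_append_cons (d := 0) (by omega) (lt_of_le_of_lt ?_ hx) γ
    exact hz.getD_le_getD hα hj hp (by rwa [Nat.sub_sub_self hij])

theorem getD_le_getD_of_lt_drop (hz : IsLongestBorder α m j z) (hj : j < α.length)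
    {r : List ℕ} (hr : r.take j = α.take j) (hrj : j < r.length) (hlt : α < r.drop (j - z)) :
    α.getD z 0 ≤ r.getD j 0 := by
  by_contra! h
  rw [List.drop_eq_drop_take_append_drop (by omega) hrj.le, hr, hz.drop_eq,
    List.drop_eq_getD_cons 0 hrj] at hlt
  have := hz.add_le
  exact hlt.not_gt (List.take_append_cons_lt (by omega) h _)

end IsLongestBorder

theorem IsLongestBorder.of_drop_drop {β : Type*} {α : List β} {m j z : ℕ} (hj : j ≤ α.length)
    (hmj : m ≤ j) (hzlen : z ≤ ((α.take j).drop m).length)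
    (hzeq : ((α.take j).drop m).drop (((α.take j).drop m).length - z) = α.take z)
    (hzmax : ∀ z' : ℕ, z' ≤ ((α.take j).drop m).length →
      ((α.take j).drop m).drop (((α.take j).drop m).length - z') = α.take z' → z' ≤ z) :
    IsLongestBorder α m j z := by
  have hL : ((α.take j).drop m).length = j - m := by simp; omega
  have hdrop (p : ℕ) (hp : p ≤ j - m) :
      ((α.take j).drop m).drop (j - m - p) = (α.take j).drop (j - p) := by
    rw [List.drop_drop]
    congr 1
    omega
  rw [hL] at hzlen hzeq hzmax
  refine ⟨by omega, by rwa [← hdrop z hzlen], fun p hp hpd => hzmax p (by omega) ?_⟩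
  rwa [hdrop p (by omega)]

section Fibers

variable {k n w t j z : ℕ} {α : List ℕ}

theorem take_append_getD_cons_of_mem_AStrings {r : List ℕ} (hr : r ∈ AStrings k n w α t j)
    (hj : j < n) : α.take j ++ r.getD j 0 :: r.drop (j + 1) = r := by
  rw [← hr.2.2.2.1, ← List.drop_eq_getD_cons 0 (by rw [hr.2.1]; exact hj), List.take_append_drop]

theorem take_append_cons_mem_AStrings (hstr : IsStr k α) (hlen : α.length = n) (hj : j < n)
    {x : ℕ} {γ : List ℕ} (hx : 1 ≤ x) (hxj : x < α.getD j 0) (hγ : IsStr k γ)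
    (hγl : γ.length = n - j - 1) (hw : w ≤ (α.take j ++ x :: γ).sum)
    (hsuf : ∀ i, n - t < i → i < n → α < (α.take j ++ x :: γ).drop i) :
    α.take j ++ x :: γ ∈ AStrings k n w α t j := by
  have htj : (α.take j).length = j := by simp; omega
  have hαj := (hstr.getD_bounds (i := j) (by omega)).2
  refine ⟨fun y hy => ?_, by simp; omega, hw, List.take_left' htj, by simpa [htj] using hxj,
    by simpa [List.length_append, htj] using hsuf⟩
  rcases List.mem_append.1 hy with hy | hy | ⟨_, hy⟩
  · exact hstr y (List.mem_of_mem_take hy)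
  · exact ⟨hx, by omega⟩
  · exact hγ y hy

theorem fiber_eq_image_of_lt (hz : IsLongestBorder α (n - t + 1) j z) (hα : IsNecklace α)
    (hstr : IsStr k α) (hlen : α.length = n) (hj : j < n) {x : ℕ} (hzx : α.getD z 0 < x)
    (hxj : x < α.getD j 0) :
    {r ∈ AStrings k n w α t j | r.getD j 0 = x} =
      (fun γ => α.take j ++ x :: γ) ''
        BStrings k α (n - j - 1) 0 ((w : ℤ) - ((α.take j).sum : ℤ) - (x : ℤ)) := by
  have hzj := hz.add_le
  ext r
  constructor
  · rintro ⟨hr, rfl⟩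
    have hdecomp := take_append_getD_cons_of_mem_AStrings hr hj
    obtain ⟨hrs, hrl, hrw, -, -, hsuf⟩ := hr
    refine ⟨r.drop (j + 1), ⟨fun y hy => hrs y (List.mem_of_mem_drop hy), by simp [hrl]; omega,
      ?_, by simp, List.forall_suffix_drop_iff.2 fun i hi hin => hsuf i (by omega) (by omega)⟩,
      hdecomp⟩
    have := congrArg List.sum hdecomp
    simp only [List.sum_append, List.sum_cons] at this
    omega
  · rintro ⟨γ, ⟨hγs, hγl, hγw, -, hγsuf⟩, rfl⟩
    have htj : (α.take j).length = j := by simp; omega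
    refine ⟨take_append_cons_mem_AStrings hstr hlen hj (by omega) hxj hγs hγl ?_
      fun i hi hin => ?_, by simp [htj]⟩
    · simp only [List.sum_append, List.sum_cons]
      omega
    rcases le_or_gt i j with hij | hji
    · exact hz.lt_drop_take_append_cons hα (by omega) hzx γ (by omega) hij
    · rw [show γ = (α.take j ++ x :: γ).drop (j + 1) by simp [List.drop_append, htj]] at hγsuf
      exact List.forall_suffix_drop_iff.1 hγsuf i hji (by simp; omega)

theorem fiber_getD_eq_image (hz : IsLongestBorder α (n - t + 1) j z) (hα : IsNecklace α)
    (hstr : IsStr k α) (hlen : α.length = n) (hj : j < n) (hzj : α.getD z 0 < α.getD j 0) :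
    {r ∈ AStrings k n w α t j | r.getD j 0 = α.getD z 0} =
      (fun β => α.take (j - z) ++ β) ''
        BStrings k α (n - j + z) (z + 1) ((w : ℤ) - ((α.take (j - z)).sum : ℤ)) := by
  have hmz := hz.add_le
  have htj : (α.take (j - z)).length = j - z := by simp; omega
  have hshape (γ : List ℕ) :
      α.take j ++ α.getD z 0 :: γ = α.take (j - z) ++ (α.take (z + 1) ++ γ) := by
    rw [← List.take_append_drop (j - z) (α.take j), List.take_take, min_eq_left (by omega),
      hz.drop_eq, List.take_add_one, List.getElem?_eq_getElem (by omega),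
      ← List.getD_eq_getElem _ 0 (by omega)]
    simp
  have hdrop (γ : List ℕ) :
      (α.take (j - z) ++ (α.take (z + 1) ++ γ)).drop (j - z) = α.take (z + 1) ++ γ :=
    List.drop_left' htj
  ext r
  constructor
  · rintro ⟨hr, hrz⟩
    have hdecomp := take_append_getD_cons_of_mem_AStrings hr hj
    rw [hrz, hshape] at hdecomp
    obtain ⟨hrs, hrl, hrw, -, -, hsuf⟩ := hr
    generalize r.drop (j + 1) = γ at hdecomp
    subst hdecomp
    refine ⟨_, ⟨fun y hy => hrs y (List.mem_append_right _ hy), by simp at hrl ⊢; omega, ?_,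
      List.prefix_append _ _, ?_⟩, rfl⟩
    · simp only [List.sum_append] at hrw ⊢
      omega
    · rw [← hdrop]
      exact List.forall_suffix_drop_iff.2 fun i hi hin => hsuf i (by omega) (hrl ▸ hin)
  · rintro ⟨β, ⟨hβs, hβl, hβw, ⟨γ, rfl⟩, hβsuf⟩, rfl⟩
    simp only [List.length_append, List.length_take, hlen] at hβl
    have hlj : (α.take j).length = j := by simp; omega
    show α.take (j - z) ++ (α.take (z + 1) ++ γ) ∈ _
    rw [← hshape]
    refine ⟨take_append_cons_mem_AStrings hstr hlen hj (hstr.getD_bounds (by omega)).1 hzj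
      (fun y hy => hβs y (List.mem_append_right _ hy)) (by omega) ?_ fun i hi hin => ?_, ?_⟩
    · rw [hshape]
      simp only [List.sum_append] at hβw ⊢
      omega
    · rcases lt_or_ge i (j - z) with hiz | hiz
      · exact hz.lt_drop_of_lt_sub hα (by omega) (List.take_left' (by simp; omega))
          (by simp; omega) (by omega) hiz
      · rw [← hdrop, ← hshape] at hβsuf
        exact List.forall_suffix_drop_iff.1 hβsuf i hiz (by simp; omega)
    · rw [List.getD_append_right _ _ _ _ hlj.le, hlj, Nat.sub_self, List.getD_cons_zero]

end Fibers

section Counting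

variable {k n w t j z : ℕ} {α : List ℕ}

theorem getD_le_getD_of_mem_AStrings (hz : IsLongestBorder α (n - t + 1) j z)
    (hlen : α.length = n) (hj : j < n) {r : List ℕ} (hr : r ∈ AStrings k n w α t j) :
    α.getD z 0 ≤ r.getD j 0 :=
  have := hz.add_le
  hz.getD_le_getD_of_lt_drop (by omega) hr.2.2.2.1 (by rw [hr.2.1]; exact hj)
    (hr.2.2.2.2.2 _ (by omega) (by omega))

theorem AStrings_eq_empty (hz : IsLongestBorder α (n - t + 1) j z) (hlen : α.length = n)
    (hj : j < n) (hjz : α.getD j 0 ≤ α.getD z 0) : AStrings k n w α t j = ∅ :=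
  Set.eq_empty_of_forall_notMem fun _ hr =>
    (getD_le_getD_of_mem_AStrings hz hlen hj hr).not_gt (hr.2.2.2.2.1.trans_le hjz)

theorem ncard_AStrings (hz : IsLongestBorder α (n - t + 1) j z) (hα : IsNecklace α)
    (hstr : IsStr k α) (hlen : α.length = n) (hj : j < n) (hzj : α.getD z 0 < α.getD j 0) :
    (AStrings k n w α t j).ncard =
      Bcount k α (n - j + z) (z + 1) ((w : ℤ) - ((α.take (j - z)).sum : ℤ)) +
        ∑ x ∈ Finset.Ioo (α.getD z 0) (α.getD j 0),
          Bcount k α (n - j - 1) 0 ((w : ℤ) - ((α.take j).sum : ℤ) - (x : ℤ)) := by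
  have hfibers : AStrings k n w α t j = ⋃ x ∈ (Finset.Ico (α.getD z 0) (α.getD j 0) : Set ℕ),
      {r ∈ AStrings k n w α t j | r.getD j 0 = x} := by
    ext r
    simp only [Set.mem_iUnion, Finset.coe_Ico, Set.mem_Ico, exists_prop]
    exact ⟨fun hr => ⟨_, ⟨getD_le_getD_of_mem_AStrings hz hlen hj hr, hr.2.2.2.2.1⟩, hr, rfl⟩,
      fun ⟨_, _, hr, _⟩ => hr⟩
  simp only [Bcount_eq_ncard]
  rw [hfibers, Set.Finite.ncard_biUnion (Finset.finite_toSet _)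
      (fun _ _ => (AStrings_finite k n w α t j).subset fun _ hr => hr.1)
      (fun _ _ _ _ hxy => Set.disjoint_left.2 fun _ hx hy => hxy (hx.2.symm.trans hy.2)),
    finsum_mem_coe_finset, ← Finset.Ioo_insert_left hzj,
    Finset.sum_insert Finset.left_notMem_Ioo, fiber_getD_eq_image hz hα hstr hlen hj hzj,
    Set.ncard_image_of_injective _ (List.append_right_injective _)]
  congr 1
  refine Finset.sum_congr rfl fun x hx => ?_
  rw [fiber_eq_image_of_lt hz hα hstr hlen hj (Finset.mem_Ioo.1 hx).1 (Finset.mem_Ioo.1 hx).2,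
    Set.ncard_image_of_injective _ fun _ _ h => by simpa using h]

end Counting

theorem Acount_case2_general
    (n k w : ℕ) (α : List ℕ)
    (hstr : IsStr k α) (hlen : α.length = n) (hneck : IsNecklace α)
    (t j : ℕ) (htn : t ≤ n) (hj : j ≤ n - 1) (htj : n < t + j)
    (z : ℕ) (hzlen : z ≤ ((α.take j).drop (n - t + 1)).length)
    (hzeq : ((α.take j).drop (n - t + 1)).drop
        (((α.take j).drop (n - t + 1)).length - z) = α.take z)
    (hzmax : ∀ z' : ℕ, z' ≤ ((α.take j).drop (n - t + 1)).length →
      ((α.take j).drop (n - t + 1)).drop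
          (((α.take j).drop (n - t + 1)).length - z') = α.take z' →
      z' ≤ z) :
    (α.getD z 0 < α.getD j 0 →
      Acount k n w α t j =
        Bcount k α (n - j + z) (z + 1) ((w : ℤ) - ((α.take (j - z)).sum : ℤ)) +
          ∑ x ∈ Finset.Ioo (α.getD z 0) (α.getD j 0),
            Bcount k α (n - j - 1) 0 ((w : ℤ) - ((α.take j).sum : ℤ) - (x : ℤ))) ∧
    (α.getD j 0 ≤ α.getD z 0 → Acount k n w α t j = 0) := by
  have hjn : j < n := by omega
  have hz : IsLongestBorder α (n - t + 1) j z :=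
    .of_drop_drop (by omega) (by omega) hzlen hzeq hzmax
  rw [Acount_eq_ncard_AStrings hneck hlen htn hjn]
  exact ⟨ncard_AStrings hz hneck hstr hlen hjn,
    fun hjz => by rw [AStrings_eq_empty hz hlen hjn hjz, Set.ncard_empty]⟩

/-- Case 2 (`t + j > n`) of the formula for `A(t,j)`.  Here `z` is the length of the
longest suffix of `a_{n-t+2}⋯a_j` (i.e. of `(α.take j).drop (n-t+1)`) equal to the
prefix `a₁⋯a_z` of `α`.  If `a_{j+1} > a_{z+1}` then
`A(t,j) = B(n-j+z, z+1, w - wt(a₁⋯a_{j-z})) + Σ_{x=a_{z+1}+1}^{a_{j+1}-1} B(n-j-1, 0, w - wt(a₁⋯a_j) - x)`,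
and otherwise `A(t,j) = 0`. -/
theorem Acount_case2
    (n k w : ℕ) (hn : 1 < n) (hk : 1 < k) (α : List ℕ)
    (hstr : IsStr k α) (hlen : α.length = n) (hwt : w ≤ α.sum) (hneck : IsNecklace α)
    (t j : ℕ) (ht1 : 1 ≤ t) (htn : t ≤ n) (hj : j ≤ n - 1) (htj : n < t + j)
    (z : ℕ) (hzlen : z ≤ ((α.take j).drop (n - t + 1)).length)
    (hzeq : ((α.take j).drop (n - t + 1)).drop
        (((α.take j).drop (n - t + 1)).length - z) = α.take z)
    (hzmax : ∀ z' : ℕ, z' ≤ ((α.take j).drop (n - t + 1)).length →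
      ((α.take j).drop (n - t + 1)).drop
          (((α.take j).drop (n - t + 1)).length - z') = α.take z' →
      z' ≤ z) :
    (α.getD z 0 < α.getD j 0 →
      Acount k n w α t j =
        Bcount k α (n - j + z) (z + 1) ((w : ℤ) - ((α.take (j - z)).sum : ℤ)) +
          ∑ x ∈ Finset.Ioo (α.getD z 0) (α.getD j 0),
            Bcount k α (n - j - 1) 0 ((w : ℤ) - ((α.take j).sum : ℤ) - (x : ℤ))) ∧
    (α.getD j 0 ≤ α.getD z 0 → Acount k n w α t j = 0) :=
  Acount_case2_general n k w α hstr hlen hneck t j htn hj htj z hzlen hzeq hzmax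
end
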